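/- Let d > 1 be an odd integer with gcd(d,ab) = 1. Then d is (T,k)-good with respect to (a,b) if and only if there exists a positive integer α such that: (1) ν₂(ord_p(a·b⁻¹)) = α for every prime p dividing d; (2) T ≡ 2^(α−1) (mod 2^min(α,ν₂(k))); and (3) gcd(k/2^(ν₂(k)), L/2^α) divides T, where L is the least common multiple of ord_{p^e}(a·b⁻¹) over the maximal prime powers p^e dividing d. -/

import Mathlib

/-!
Write `x_p = a b⁻¹` modulo the prime power `p^e ∥ d` and `t_p` for its order. Since `±1` are the
only square roots of `1` modulo an odd prime power, `d ∣ a^n + b^n` iff `t_p ∣ 2n` but `t_p ∤ n`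
for every `p`, i.e. `ν₂ t_p = ν₂ n + 1` and the odd part of `t_p` divides `n`. Hence all `ν₂ t_p`
equal a common `α` (which is also `ν₂ ord_p(a b⁻¹)`, as `t_p / ord_p(a b⁻¹)` is a power of `p`), and
the condition becomes `n ≡ L/2 (mod L)` for `L = lcm t_p`. The numbers `ks + T` with `s > 0` meet
this residue class iff `T ≡ L/2 (mod gcd(k, L))`, and splitting
`gcd(k, L) = 2^min(α, ν₂ k) · gcd(k / 2^ν₂ k, L / 2^α)` into its `2`-part and odd part gives the
two congruence conditions.
-/

namespace Nat

theorem ne_zero_of_factorization_ne_zero {n p : ℕ} (h : n.factorization p ≠ 0) : n ≠ 0 := by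
  rintro rfl
  exact h (by rw [factorization_zero, Finsupp.zero_apply])

theorem dvd_iff_forall_ordProj_dvd {d n : ℕ} (hd : d ≠ 0) :
    d ∣ n ↔ ∀ p ∈ d.primeFactors, p ^ d.factorization p ∣ n := by
  refine ⟨fun h p _ => (ordProj_dvd d p).trans h,
    fun h => (dvd_iff_prime_pow_dvd_dvd n d).mpr fun p k hp hpk => ?_⟩
  rcases eq_or_ne k 0 with rfl | hk
  · simp
  have hmem : p ∈ d.primeFactors := mem_primeFactors.mpr ⟨hp, (dvd_pow_self p hk).trans hpk, hd⟩
  exact (pow_dvd_pow p ((hp.pow_dvd_iff_le_factorization hd).mp hpk)).trans (h p hmem)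

theorem factorization_ne_zero_of_mem_primeFactors {n p : ℕ} (hp : p ∈ n.primeFactors) :
    n.factorization p ≠ 0 :=
  Finsupp.mem_support_iff.mp ((support_factorization n).symm ▸ hp)

theorem dvd_of_dvd_two_mul_of_factorization_two_le {t n : ℕ} (hn : n ≠ 0) (h : t ∣ 2 * n)
    (h2 : t.factorization 2 ≤ n.factorization 2) : t ∣ n := by
  have h2n : 2 * n ≠ 0 := mul_ne_zero two_ne_zero hn
  have ht : t ≠ 0 := ne_zero_of_dvd_ne_zero h2n h
  rw [← factorization_le_iff_dvd ht hn]
  intro q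
  rcases eq_or_ne q 2 with rfl | hq
  · exact h2
  · simpa [factorization_mul two_ne_zero hn, prime_two.factorization, Finsupp.single_eq_of_ne hq]
      using (factorization_le_iff_dvd ht h2n).mpr h q

theorem factorization_two_eq_succ_of_dvd_two_mul_of_not_dvd {t n : ℕ} (hn : n ≠ 0)
    (h : t ∣ 2 * n) (h' : ¬ t ∣ n) : t.factorization 2 = n.factorization 2 + 1 := by
  have h2n : 2 * n ≠ 0 := mul_ne_zero two_ne_zero hn
  have hle := (factorization_le_iff_dvd (ne_zero_of_dvd_ne_zero h2n h) h2n).mpr h 2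
  rw [factorization_mul two_ne_zero hn, Finsupp.add_apply, prime_two.factorization_self] at hle
  have := mt (dvd_of_dvd_two_mul_of_factorization_two_le hn h) h'
  omega

theorem dvd_two_mul_and_not_dvd_iff_modEq {L n : ℕ} (hL : Even L) (hL0 : L ≠ 0) :
    L ∣ 2 * n ∧ ¬ L ∣ n ↔ n ≡ L / 2 [MOD L] := by
  obtain ⟨y, rfl⟩ := hL
  have hy : 0 < y := by omega
  rw [← two_mul, Nat.mul_div_cancel_left y two_pos, Nat.mul_dvd_mul_iff_left two_pos]
  constructor
  · rintro ⟨⟨q, rfl⟩, hq⟩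
    have hodd : q ≡ 1 [MOD 2] := by
      rcases mod_two_eq_zero_or_one q with h0 | h1
      · obtain ⟨r, rfl⟩ := dvd_of_mod_eq_zero h0
        exact absurd ⟨r, by ring⟩ hq
      · exact h1
    have := hodd.mul_left' y
    rwa [mul_one, mul_comm y 2] at this
  · intro h
    refine ⟨(h.dvd_iff (dvd_mul_left y 2)).mpr dvd_rfl, fun h2 => ?_⟩
    have := le_of_dvd hy ((h.dvd_iff dvd_rfl).mp h2)
    omega

theorem exists_pos_mul_add_modEq_iff {k M T c : ℕ} (hk : k ≠ 0) (hM : M ≠ 0) :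
    (∃ s, 0 < s ∧ k * s + T ≡ c [MOD M]) ↔ T ≡ c [MOD k.gcd M] := by
  constructor
  · rintro ⟨s, -, hs⟩
    have hks : k * s + T ≡ 0 + T [MOD k.gcd M] :=
      (modEq_zero_iff_dvd.mpr (dvd_mul_of_dvd_left (gcd_dvd_left k M) s)).add_right T
    rw [zero_add] at hks
    exact hks.symm.trans (hs.of_dvd (gcd_dvd_right k M))
  · intro h
    obtain ⟨n, hnk, hnM⟩ := chineseRemainder' h
    -- shifting the Chinese-remainder solution by a multiple of `k * M` pushes it above `T`
    set N := n + k * M * (T + 1)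
    have hTN : T < N := by
      have := Nat.le_mul_of_pos_left (T + 1) (Nat.pos_of_ne_zero (mul_ne_zero hk hM))
      omega
    have hshift : ∀ m, m ∣ k * M → N ≡ n [MOD m] := fun m hm => by
      have := (modEq_zero_iff_dvd.mpr (dvd_mul_of_dvd_left hm (T + 1))).add_left n
      rwa [add_zero] at this
    obtain ⟨s, hs⟩ := (modEq_iff_dvd' hTN.le).mp ((hshift k (dvd_mul_right k M)).trans hnk).symm
    refine ⟨s, Nat.pos_of_ne_zero ?_, ?_⟩
    · rintro rfl
      omega
    · rw [← hs, Nat.sub_add_cancel hTN.le]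
      exact (hshift M (dvd_mul_left M k)).trans hnM

theorem modEq_div_two_gcd_iff {k L T α : ℕ} (hk : k ≠ 0) (hα : α ≠ 0)
    (hL : L.factorization 2 = α) :
    T ≡ L / 2 [MOD k.gcd L] ↔ T ≡ 2 ^ (α - 1) [MOD 2 ^ min α (k.factorization 2)] ∧
      (k / 2 ^ k.factorization 2).gcd (L / 2 ^ α) ∣ T := by
  have hL0 : L ≠ 0 := ne_zero_of_factorization_ne_zero (hL ▸ hα)
  have hk' := coprime_ordCompl prime_two hk
  have hL' : Coprime 2 (L / 2 ^ α) := hL ▸ coprime_ordCompl prime_two hL0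
  have hLL := (ordProj_mul_ordCompl_eq_self L 2).symm
  rw [hL] at hLL
  set v := k.factorization 2
  set k' := k / 2 ^ v
  set L' := L / 2 ^ α
  have hkk : k = 2 ^ v * k' := (ordProj_mul_ordCompl_eq_self k 2).symm
  have hpow : (2 ^ v).gcd (2 ^ α) = 2 ^ min α v := by
    rcases le_total α v with h | h
    · rw [min_eq_left h, gcd_eq_right (pow_dvd_pow 2 h)]
    · rw [min_eq_right h, gcd_eq_left (pow_dvd_pow 2 h)]
  have hgcd : k.gcd L = 2 ^ min α v * k'.gcd L' := by
    rw [hkk, hLL, Coprime.gcd_mul _ (hL'.pow_left α),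
      Coprime.gcd_mul_right_cancel _ (hk'.pow_left α).symm,
      Coprime.gcd_mul_left_cancel _ (hL'.pow_left v), hpow]
  have h2α : 2 ^ (α - 1) * 2 = 2 ^ α := by rw [← pow_succ, Nat.sub_add_cancel (by omega)]
  have hhalf : L / 2 = 2 ^ (α - 1) * L' := by
    rw [hLL, ← h2α, mul_assoc, mul_comm 2, ← mul_assoc, Nat.mul_div_cancel _ two_pos]
  have hc2 : 2 ^ (α - 1) * L' ≡ 2 ^ (α - 1) [MOD 2 ^ min α v] := by
    have hodd : L' ≡ 1 [MOD 2] := odd_iff.mp (coprime_two_left.mp hL')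
    have := hodd.mul_left' (2 ^ (α - 1))
    rw [mul_one, h2α] at this
    exact this.of_dvd (pow_dvd_pow 2 (min_le_left α v))
  have hcg : 2 ^ (α - 1) * L' ≡ 0 [MOD k'.gcd L'] :=
    modEq_zero_iff_dvd.mpr (dvd_mul_of_dvd_right (gcd_dvd_right k' L') _)
  have hcop : Coprime (2 ^ min α v) (k'.gcd L') :=
    (hk'.coprime_dvd_right (gcd_dvd_left k' L')).pow_left _
  rw [hgcd, hhalf, ← modEq_and_modEq_iff_modEq_mul hcop, ← modEq_zero_iff_dvd]
  exact and_congr ⟨fun h => h.trans hc2, fun h => h.trans hc2.symm⟩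
    ⟨fun h => h.trans hcg, fun h => h.trans hcg.symm⟩

end Nat

namespace Finset

variable {ι : Type*} {s : Finset ι} {f : ι → ℕ}

theorem factorization_lcm_of_forall_eq (hs : s.Nonempty) {p α : ℕ} (hα : α ≠ 0)
    (hf : ∀ i ∈ s, (f i).factorization p = α) : (s.lcm f).factorization p = α := by
  have hf0 : ∀ i ∈ s, f i ≠ 0 := fun i hi => Nat.ne_zero_of_factorization_ne_zero (hf i hi ▸ hα)
  rw [factorization_lcm hf0, sup_congr rfl hf, sup_const hs]

theorem forall_dvd_two_mul_and_not_dvd_iff (hs : s.Nonempty) {α n : ℕ}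
    (hf : ∀ i ∈ s, (f i).factorization 2 = α) :
    (∀ i ∈ s, f i ∣ 2 * n ∧ ¬ f i ∣ n) ↔ s.lcm f ∣ 2 * n ∧ ¬ s.lcm f ∣ n := by
  constructor
  · intro h
    obtain ⟨i, hi⟩ := hs
    exact ⟨lcm_dvd fun j hj => (h j hj).1, fun hL => (h i hi).2 ((dvd_lcm hi).trans hL)⟩
  · rintro ⟨h2n, hn⟩ i hi
    refine ⟨(dvd_lcm hi).trans h2n, fun hin => hn (lcm_dvd fun j hj => ?_)⟩
    have hn0 : n ≠ 0 := by
      rintro rfl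
      exact hn (dvd_zero _)
    refine Nat.dvd_of_dvd_two_mul_of_factorization_two_le hn0 ((dvd_lcm hj).trans h2n) ?_
    rw [hf j hj, ← hf i hi]
    exact (Nat.factorization_le_iff_dvd (ne_zero_of_dvd_ne_zero hn0 hin) hn0).mpr hin 2

end Finset

section TwoAdic

variable {ι : Type*} {S : Finset ι} {t : ι → ℕ} {k T : ℕ}

theorem exists_pos_mul_add_forall_dvd_two_mul_and_not_dvd_iff_of_factorization_eq
    (hS : S.Nonempty) (hk : k ≠ 0) {α : ℕ} (hα : α ≠ 0)
    (ht : ∀ i ∈ S, (t i).factorization 2 = α) :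
    (∃ s, 0 < s ∧ ∀ i ∈ S, t i ∣ 2 * (k * s + T) ∧ ¬ t i ∣ k * s + T) ↔
      T ≡ 2 ^ (α - 1) [MOD 2 ^ min α (k.factorization 2)] ∧
        (k / 2 ^ k.factorization 2).gcd (S.lcm t / 2 ^ α) ∣ T := by
  have hL := Finset.factorization_lcm_of_forall_eq hS hα ht
  have hL0 : S.lcm t ≠ 0 := Nat.ne_zero_of_factorization_ne_zero (hL ▸ hα)
  have hLeven : Even (S.lcm t) := even_iff_two_dvd.mpr (Nat.dvd_of_factorization_pos (hL ▸ hα))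
  simp_rw [Finset.forall_dvd_two_mul_and_not_dvd_iff hS ht,
    Nat.dvd_two_mul_and_not_dvd_iff_modEq hLeven hL0]
  rw [Nat.exists_pos_mul_add_modEq_iff hk hL0, Nat.modEq_div_two_gcd_iff hk hα hL]

theorem exists_pos_mul_add_forall_dvd_two_mul_and_not_dvd_iff (hS : S.Nonempty) (hk : k ≠ 0) :
    (∃ s, 0 < s ∧ ∀ i ∈ S, t i ∣ 2 * (k * s + T) ∧ ¬ t i ∣ k * s + T) ↔
      ∃ α, 0 < α ∧ (∀ i ∈ S, (t i).factorization 2 = α) ∧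
        T ≡ 2 ^ (α - 1) [MOD 2 ^ min α (k.factorization 2)] ∧
        (k / 2 ^ k.factorization 2).gcd (S.lcm t / 2 ^ α) ∣ T := by
  constructor
  · rintro ⟨s, hs, h⟩
    have hn : k * s + T ≠ 0 := by positivity
    have ht : ∀ i ∈ S, (t i).factorization 2 = (k * s + T).factorization 2 + 1 := fun i hi =>
      Nat.factorization_two_eq_succ_of_dvd_two_mul_of_not_dvd hn (h i hi).1 (h i hi).2
    exact ⟨_, Nat.succ_pos _, ht,
      (exists_pos_mul_add_forall_dvd_two_mul_and_not_dvd_iff_of_factorization_eq hS hk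
        (Nat.succ_ne_zero _) ht).mp ⟨s, hs, h⟩⟩
  · rintro ⟨α, hα, ht, hT⟩
    exact (exists_pos_mul_add_forall_dvd_two_mul_and_not_dvd_iff_of_factorization_eq hS hk
      hα.ne' ht).mpr hT

end TwoAdic

namespace ZMod

theorem natCast_dvd_pow_add_pow_iff {m : ℕ} {a b : ℤ} (hb : IsUnit (b : ZMod m)) (n : ℕ) :
    (m : ℤ) ∣ a ^ n + b ^ n ↔ ((a : ZMod m) * (b : ZMod m)⁻¹) ^ n = -1 := by
  have hbn : (b : ZMod m) ^ n * ((b : ZMod m)⁻¹) ^ n = 1 := by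
    rw [← mul_pow, mul_inv_of_unit _ hb, one_pow]
  rw [← intCast_zmod_eq_zero_iff_dvd, Int.cast_add, Int.cast_pow, Int.cast_pow, mul_pow]
  constructor
  · intro h
    linear_combination ((b : ZMod m)⁻¹) ^ n * h - hbn
  · intro h
    linear_combination (b : ZMod m) ^ n * h - (a : ZMod m) ^ n * hbn

theorem eq_one_or_eq_neg_one_of_sq_eq_one {p e : ℕ} (hp : p.Prime) (hp2 : p ≠ 2)
    {y : ZMod (p ^ e)} (hy : y ^ 2 = 1) : y = 1 ∨ y = -1 := by
  obtain ⟨c, rfl⟩ := intCast_surjective y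
  have hpz : Prime (p : ℤ) := Nat.prime_iff_prime_int.mp hp
  have hcast : ∀ z : ℤ, (p : ℤ) ^ e ∣ z ↔ (z : ZMod (p ^ e)) = 0 := fun z => by
    rw [intCast_zmod_eq_zero_iff_dvd, Nat.cast_pow]
  have h : (p : ℤ) ^ e ∣ (c - 1) * (c + 1) := by
    rw [hcast]
    push_cast
    linear_combination hy
  have hnot : ¬ (p : ℤ) ∣ c - 1 ∨ ¬ (p : ℤ) ∣ c + 1 := by
    by_contra! h'
    have : (p : ℤ) ∣ 2 := by simpa using dvd_sub h'.2 h'.1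
    exact hp2 ((Nat.prime_dvd_prime_iff_eq hp Nat.prime_two).mp (by exact_mod_cast this))
  rcases hnot with h1 | h1
  · have := (hcast _).mp (hpz.pow_dvd_of_dvd_mul_left e h1 h)
    push_cast at this
    exact Or.inr (by linear_combination this)
  · have := (hcast _).mp (hpz.pow_dvd_of_dvd_mul_right e h1 h)
    push_cast at this
    exact Or.inl (by linear_combination this)

theorem pow_eq_neg_one_iff {p e : ℕ} (hp : p.Prime) (hp2 : p ≠ 2) (he : e ≠ 0)
    {x : ZMod (p ^ e)} {n : ℕ} : x ^ n = -1 ↔ orderOf x ∣ 2 * n ∧ ¬ orderOf x ∣ n := by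
  have : Fact (2 < p ^ e) :=
    ⟨lt_of_lt_of_le (lt_of_le_of_ne hp.two_le hp2.symm) (Nat.le_self_pow he p)⟩
  rw [orderOf_dvd_iff_pow_eq_one, orderOf_dvd_iff_pow_eq_one, mul_comm, pow_mul]
  constructor
  · intro h
    rw [h]
    exact ⟨by norm_num, neg_one_ne_one⟩
  · rintro ⟨h2, hn⟩
    exact (eq_one_or_eq_neg_one_of_sq_eq_one hp hp2 h2).resolve_left hn

theorem castHom_inv_of_isUnit {m n : ℕ} (h : n ∣ m) {u : ZMod m} (hu : IsUnit u) :
    castHom h (ZMod n) u⁻¹ = (castHom h (ZMod n) u)⁻¹ :=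
  (ZMod.inv_eq_of_mul_eq_one _ _ _ (by rw [← map_mul, mul_inv_of_unit u hu, map_one])).symm

theorem orderOf_dvd_orderOf_castHom_mul {p e : ℕ} (he : e ≠ 0)
    (x : ZMod (p ^ e)) :
    orderOf x ∣ orderOf (castHom (dvd_pow_self p he) (ZMod p) x) * p ^ (e - 1) := by
  set f := castHom (dvd_pow_self p he) (ZMod p)
  have h1 : (p : ZMod (p ^ e)) ∣ x ^ orderOf (f x) - 1 := by
    obtain ⟨c, hc⟩ := intCast_surjective (x ^ orderOf (f x) - 1)
    have : ((c : ℤ) : ZMod p) = 0 := by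
      rw [← map_intCast f, hc, map_sub, map_pow, pow_orderOf_eq_one, map_one, sub_self]
    obtain ⟨m, rfl⟩ := (intCast_zmod_eq_zero_iff_dvd c p).mp this
    exact ⟨m, by rw [← hc]; push_cast; ring⟩
  -- `x ^ orderOf (f x) ≡ 1 (mod p)`, and each further `p`-th power gains one factor of `p`
  have h2 := dvd_sub_pow_of_dvd_sub h1 (e - 1)
  rw [Nat.sub_add_cancel (Nat.one_le_iff_ne_zero.mpr he), ← Nat.cast_pow, natCast_self,
    zero_dvd_iff, one_pow, sub_eq_zero, ← pow_mul] at h2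
  exact orderOf_dvd_of_pow_eq_one h2

theorem factorization_orderOf_castHom {p e q : ℕ} (hp : p.Prime) (he : e ≠ 0) (hq : q ≠ p)
    (x : ZMod (p ^ e)) :
    (orderOf (castHom (dvd_pow_self p he) (ZMod p) x)).factorization q =
      (orderOf x).factorization q := by
  set t := orderOf (castHom (dvd_pow_self p he) (ZMod p) x)
  have hdvd : t ∣ orderOf x := orderOf_map_dvd (castHom (dvd_pow_self p he) (ZMod p)).toMonoidHom x
  have hdvd' := orderOf_dvd_orderOf_castHom_mul he x
  rcases eq_or_ne t 0 with ht | ht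
  · rw [ht] at hdvd ⊢
    rw [eq_zero_of_zero_dvd hdvd]
  have hpe : p ^ (e - 1) ≠ 0 := pow_ne_zero _ hp.ne_zero
  have hx : orderOf x ≠ 0 := ne_zero_of_dvd_ne_zero (mul_ne_zero ht hpe) hdvd'
  refine le_antisymm ((Nat.factorization_le_iff_dvd ht hx).mpr hdvd q) ?_
  simpa [Nat.factorization_mul ht hpe, hp.factorization_pow, Finsupp.single_eq_of_ne hq]
    using (Nat.factorization_le_iff_dvd hx (mul_ne_zero ht hpe)).mpr hdvd' q

end ZMod

section OddModulus

variable {a b : ℤ} {d : ℕ}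

theorem isUnit_intCast_zmod_ordProj (hb : IsCoprime (d : ℤ) b) (p : ℕ) :
    IsUnit (b : ZMod (p ^ d.factorization p)) :=
  (ZMod.coe_int_isUnit_iff_isCoprime _ _).mpr
    (hb.of_isCoprime_of_dvd_left (by exact_mod_cast Nat.ordProj_dvd d p))

theorem dvd_pow_add_pow_iff_forall_orderOf (hd : Odd d) (hb : IsCoprime (d : ℤ) b) (n : ℕ) :
    (d : ℤ) ∣ a ^ n + b ^ n ↔ ∀ p ∈ d.primeFactors,
      orderOf ((a : ZMod (p ^ d.factorization p)) * (b : ZMod (p ^ d.factorization p))⁻¹) ∣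
        2 * n ∧
      ¬ orderOf ((a : ZMod (p ^ d.factorization p)) * (b : ZMod (p ^ d.factorization p))⁻¹) ∣
        n := by
  rw [Int.natCast_dvd, Nat.dvd_iff_forall_ordProj_dvd hd.pos.ne']
  refine forall₂_congr fun p hp => ?_
  rw [← Int.natCast_dvd, ZMod.natCast_dvd_pow_add_pow_iff (isUnit_intCast_zmod_ordProj hb p),
    ZMod.pow_eq_neg_one_iff (Nat.prime_of_mem_primeFactors hp)
      (hd.ne_two_of_dvd_nat (Nat.dvd_of_mem_primeFactors hp))
      (Nat.factorization_ne_zero_of_mem_primeFactors hp)]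

theorem padicValNat_two_orderOf_eq_of_mem_primeFactors (hd : Odd d) (hb : IsCoprime (d : ℤ) b)
    {p : ℕ} (hp : p ∈ d.primeFactors) :
    padicValNat 2 (orderOf ((a : ZMod p) * (b : ZMod p)⁻¹)) =
      (orderOf ((a : ZMod (p ^ d.factorization p)) *
        (b : ZMod (p ^ d.factorization p))⁻¹)).factorization 2 := by
  rw [← Nat.factorization_def _ Nat.prime_two,
    ← ZMod.factorization_orderOf_castHom (Nat.prime_of_mem_primeFactors hp)
      (Nat.factorization_ne_zero_of_mem_primeFactors hp)
      (hd.ne_two_of_dvd_nat (Nat.dvd_of_mem_primeFactors hp)).symm,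
    map_mul, ZMod.castHom_inv_of_isUnit _ (isUnit_intCast_zmod_ordProj hb p), map_intCast,
    map_intCast]

end OddModulus

theorem stmt_6_general (a b : ℤ)
    (d : ℕ) (hd1 : 1 < d) (hd : Odd d) (hdab : IsCoprime (d : ℤ) (a * b))
    (k T : ℕ) (hT : T < k) :
    (∃ s : ℕ, 0 < s ∧ (d : ℤ) ∣ a ^ (k * s + T) + b ^ (k * s + T)) ↔
      ∃ α : ℕ, 0 < α ∧
        (∀ p ∈ d.primeFactors,
          padicValNat 2 (orderOf ((a : ZMod p) * (b : ZMod p)⁻¹)) = α) ∧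
        T ≡ 2 ^ (α - 1) [MOD 2 ^ (min α (padicValNat 2 k))] ∧
        Nat.gcd (k / 2 ^ (padicValNat 2 k))
          ((d.primeFactors.lcm fun p =>
            orderOf ((a : ZMod (p ^ (d.factorization p))) *
              (b : ZMod (p ^ (d.factorization p)))⁻¹)) / 2 ^ α) ∣ T := by
  have hb : IsCoprime (d : ℤ) b := hdab.of_mul_right_right
  simp_rw [dvd_pow_add_pow_iff_forall_orderOf hd hb, ← Nat.factorization_def k Nat.prime_two]
  refine (exists_pos_mul_add_forall_dvd_two_mul_and_not_dvd_iff
    (Nat.nonempty_primeFactors.mpr hd1) (by omega)).trans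
    (exists_congr fun α => and_congr_right fun _ => and_congr_left fun _ =>
      forall₂_congr fun p hp => by rw [padicValNat_two_orderOf_eq_of_mem_primeFactors hd hb hp])

/-- global 2-adic characterization of odd `(T,k)`-good integers. -/
theorem stmt_6 (a b : ℤ) (ha : a ≠ 0) (hb : b ≠ 0) (hab : IsCoprime a b)
    (d : ℕ) (hd1 : 1 < d) (hd : Odd d) (hdab : IsCoprime (d : ℤ) (a * b))
    (k T : ℕ) (hT : T < k) :
    (∃ s : ℕ, 0 < s ∧ (d : ℤ) ∣ a ^ (k * s + T) + b ^ (k * s + T)) ↔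
      ∃ α : ℕ, 0 < α ∧
        (∀ p ∈ d.primeFactors,
          padicValNat 2 (orderOf ((a : ZMod p) * (b : ZMod p)⁻¹)) = α) ∧
        T ≡ 2 ^ (α - 1) [MOD 2 ^ (min α (padicValNat 2 k))] ∧
        Nat.gcd (k / 2 ^ (padicValNat 2 k))
          ((d.primeFactors.lcm fun p =>
            orderOf ((a : ZMod (p ^ (d.factorization p))) *
              (b : ZMod (p ^ (d.factorization p)))⁻¹)) / 2 ^ α) ∣ T :=
  stmt_6_general a b d hd1 hd hdab k T hT
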